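/- For every N ≥ 1 there exists a tuple (a₀, …, a_N) ∈ ℝ^{N+1} with a_j > 0 for every j = 0, …, N such that (Σ_{n=0}^{N−1} aₙ aₙ₊₁ ω (n+1)) / (Σ_{n=0}^{N} aₙ² ω (n+1)) = U_{ω,N}. -/

import Mathlib

open scoped BigOperators

/-- The finite-dimensional quotient (Σ_{n<N} aₙ aₙ₊₁ ω(n+1)) / (Σ_{n≤N} aₙ² ω(n+1)). -/
noncomputable def thetaFin (ω : ℕ → ℝ) (N : ℕ) (a : ℕ → ℝ) : ℝ :=
  (∑ n ∈ Finset.range N, a n * a (n + 1) * ω (n + 1)) /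
    ∑ n ∈ Finset.range (N + 1), a n ^ 2 * ω (n + 1)

/-- The finite-dimensional extremal quantity U_{ω,N}. -/
noncomputable def UomegaFin (ω : ℕ → ℝ) (N : ℕ) : ℝ :=
  sSup {x : ℝ | ∃ a : ℕ → ℝ, (∃ j, j ≤ N ∧ a j ≠ 0) ∧ x = thetaFin ω N a}



/-- numerator -/
def numF (ω : ℕ → ℝ) (N : ℕ) (a : ℕ → ℝ) : ℝ :=
  ∑ n ∈ Finset.range N, a n * a (n + 1) * ω (n + 1)

/-- denominator -/
def denF (ω : ℕ → ℝ) (N : ℕ) (a : ℕ → ℝ) : ℝ :=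
  ∑ n ∈ Finset.range (N + 1), a n ^ 2 * ω (n + 1)

lemma thetaFin_eq (ω : ℕ → ℝ) (N : ℕ) (a : ℕ → ℝ) :
    thetaFin ω N a = numF ω N a / denF ω N a := rfl

lemma numF_congr {ω : ℕ → ℝ} {N : ℕ} {a b : ℕ → ℝ} (h : ∀ n ≤ N, a n = b n) :
    numF ω N a = numF ω N b := by
  refine Finset.sum_congr rfl fun n hn => ?_
  rw [Finset.mem_range] at hn
  rw [h n hn.le, h (n + 1) hn]

lemma denF_congr {ω : ℕ → ℝ} {N : ℕ} {a b : ℕ → ℝ} (h : ∀ n ≤ N, a n = b n) :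
    denF ω N a = denF ω N b := by
  refine Finset.sum_congr rfl fun n hn => ?_
  rw [Finset.mem_range, Nat.lt_succ_iff] at hn
  rw [h n hn]

lemma numF_smul (ω : ℕ → ℝ) (N : ℕ) (c : ℝ) (a : ℕ → ℝ) :
    numF ω N (fun n => c * a n) = c ^ 2 * numF ω N a := by
  simp only [numF, Finset.mul_sum]
  exact Finset.sum_congr rfl fun n _ => by ring

lemma denF_smul (ω : ℕ → ℝ) (N : ℕ) (c : ℝ) (a : ℕ → ℝ) :
    denF ω N (fun n => c * a n) = c ^ 2 * denF ω N a := by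
  simp only [denF, Finset.mul_sum]
  exact Finset.sum_congr rfl fun n _ => by ring

lemma denF_pos {ω : ℕ → ℝ} (hpos : ∀ n, 0 < ω n) {N : ℕ} {a : ℕ → ℝ}
    {j : ℕ} (hj : j ≤ N) (hja : a j ≠ 0) : 0 < denF ω N a := by
  refine Finset.sum_pos' (fun n _ => ?_) ⟨j, Finset.mem_range.mpr (Nat.lt_succ_of_le hj), ?_⟩
  · exact mul_nonneg (sq_nonneg _) (hpos _).le
  · exact mul_pos (by positivity) (hpos _)

def extv (N : ℕ) (v : Fin (N + 1) → ℝ) (n : ℕ) : ℝ :=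
  if h : n < N + 1 then v ⟨n, h⟩ else 0

lemma extv_continuous (N : ℕ) (n : ℕ) : Continuous fun v : Fin (N + 1) → ℝ => extv N v n := by
  unfold extv
  split_ifs with h
  · exact continuous_apply _
  · exact continuous_const

lemma extv_coe (N : ℕ) (v : Fin (N + 1) → ℝ) (i : Fin (N + 1)) :
    extv N v (i : ℕ) = v i := by
  simp [extv, i.isLt]

lemma extv_of_le (N : ℕ) (v : Fin (N + 1) → ℝ) {n : ℕ} (hn : n ≤ N) :
    extv N v n = v ⟨n, Nat.lt_succ_of_le hn⟩ := by
  simp [extv, Nat.lt_succ_of_le hn]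

def NfD (ω : ℕ → ℝ) (N : ℕ) (v : Fin (N + 1) → ℝ) : ℝ := numF ω N (extv N v)
def DfD (ω : ℕ → ℝ) (N : ℕ) (v : Fin (N + 1) → ℝ) : ℝ := denF ω N (extv N v)

lemma NfD_continuous (ω : ℕ → ℝ) (N : ℕ) : Continuous (NfD ω N) := by
  unfold NfD numF
  exact continuous_finset_sum _ fun n _ =>
    (((extv_continuous N n).mul (extv_continuous N (n + 1))).mul continuous_const)

lemma DfD_continuous (ω : ℕ → ℝ) (N : ℕ) : Continuous (DfD ω N) := by
  unfold DfD denF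
  exact continuous_finset_sum _ fun n _ =>
    (((extv_continuous N n).pow 2).mul continuous_const)

lemma isCompact_KD {ω : ℕ → ℝ} (hpos : ∀ n, 0 < ω n) (N : ℕ) :
    IsCompact {v : Fin (N + 1) → ℝ | DfD ω N v = 1} := by
  apply Metric.isCompact_of_isClosed_isBounded
  · exact isClosed_eq (DfD_continuous ω N) continuous_const
  · rw [isBounded_iff_forall_norm_le]
    refine ⟨Real.sqrt (∑ n ∈ Finset.range (N + 1), (ω (n + 1))⁻¹), fun v hv => ?_⟩
    have hR : (0:ℝ) ≤ Real.sqrt (∑ n ∈ Finset.range (N + 1), (ω (n + 1))⁻¹) :=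
      Real.sqrt_nonneg _
    rw [pi_norm_le_iff_of_nonneg hR]
    intro i
    rw [Real.norm_eq_abs, ← Real.sqrt_sq_eq_abs]
    apply Real.sqrt_le_sqrt
    have h1 : v i ^ 2 * ω ((i : ℕ) + 1) ≤ 1 := by
      have := Finset.single_le_sum (f := fun n => extv N v n ^ 2 * ω (n + 1))
        (fun n _ => mul_nonneg (sq_nonneg _) (hpos _).le)
        (Finset.mem_range.mpr i.isLt)
      simp only [extv_coe] at this
      calc v i ^ 2 * ω ((i : ℕ) + 1) ≤ denF ω N (extv N v) := this
        _ = 1 := hv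
    have h2 : v i ^ 2 ≤ (ω ((i : ℕ) + 1))⁻¹ := by
      have hw := hpos ((i : ℕ) + 1)
      rw [← mul_le_mul_iff_of_pos_right hw, inv_mul_cancel₀ (ne_of_gt hw)]
      exact h1
    calc v i ^ 2 ≤ (ω ((i : ℕ) + 1))⁻¹ := h2
      _ ≤ ∑ n ∈ Finset.range (N + 1), (ω (n + 1))⁻¹ :=
        Finset.single_le_sum (f := fun n => (ω (n + 1))⁻¹)
          (fun n _ => (inv_nonneg).mpr (hpos _).le) (Finset.mem_range.mpr i.isLt)

theorem stmt4 (ω : ℕ → ℝ) (hpos : ∀ n, 0 < ω n) (h0 : ω 0 = 1)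
    (hlim : Filter.Tendsto (fun n => ω n / ω (n + 1)) Filter.atTop (nhds 1))
    (N : ℕ) (hN : 1 ≤ N) :
    ∃ a : ℕ → ℝ, (∀ j, j ≤ N → 0 < a j) ∧ thetaFin ω N a = UomegaFin ω N := by
  classical
  set S : Set ℝ :=
    {x : ℝ | ∃ a : ℕ → ℝ, (∃ j, j ≤ N ∧ a j ≠ 0) ∧ x = thetaFin ω N a} with hS
  -- normalization: every value of thetaFin is attained on the "sphere" K
  have hnorm : ∀ (b : ℕ → ℝ) (j : ℕ), j ≤ N → b j ≠ 0 →
      ∃ u : Fin (N + 1) → ℝ, DfD ω N u = 1 ∧ NfD ω N u = thetaFin ω N b := by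
    intro b j hj hbj
    have hd : 0 < denF ω N b := denF_pos hpos hj hbj
    set c : ℝ := (Real.sqrt (denF ω N b))⁻¹ with hc
    have hc2 : c ^ 2 = (denF ω N b)⁻¹ := by
      rw [hc, inv_pow, Real.sq_sqrt hd.le]
    refine ⟨fun i => c * b (i : ℕ), ?_, ?_⟩
    · show denF ω N (extv N _) = 1
      rw [denF_congr (b := fun n => c * b n) (fun n hn => by rw [extv_of_le N _ hn]),
        denF_smul, hc2, inv_mul_cancel₀ (ne_of_gt hd)]
    · show numF ω N (extv N _) = _
      rw [numF_congr (b := fun n => c * b n) (fun n hn => by rw [extv_of_le N _ hn]),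
        numF_smul, hc2, thetaFin_eq, div_eq_inv_mul]
  -- maximizer on K
  obtain ⟨u₀, hu₀K, _⟩ := hnorm (fun _ => 1) 0 (Nat.zero_le N) one_ne_zero
  obtain ⟨v, hvK, hvmax⟩ := (isCompact_KD hpos N).exists_isMaxOn ⟨u₀, hu₀K⟩
    (NfD_continuous ω N).continuousOn
  -- take absolute values
  set w : Fin (N + 1) → ℝ := fun i => |v i| with hw
  have hextw : ∀ n, extv N w n = |extv N v n| := by
    intro n
    unfold extv
    split_ifs with h
    · rfl
    · exact (abs_zero).symm
  have hwK : DfD ω N w = 1 := by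
    have : DfD ω N w = DfD ω N v := by
      unfold DfD denF
      refine Finset.sum_congr rfl fun n _ => by rw [hextw, sq_abs]
    rw [this]; exact hvK
  have hwmax : ∀ u : Fin (N + 1) → ℝ, DfD ω N u = 1 → NfD ω N u ≤ NfD ω N w := by
    intro u hu
    refine le_trans (hvmax hu) ?_
    unfold NfD numF
    refine Finset.sum_le_sum fun n _ => ?_
    rw [hextw, hextw]
    calc extv N v n * extv N v (n + 1) * ω (n + 1)
        ≤ |extv N v n * extv N v (n + 1)| * ω (n + 1) :=
          mul_le_mul_of_nonneg_right (le_abs_self _) (hpos _).le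
      _ = |extv N v n| * |extv N v (n + 1)| * ω (n + 1) := by rw [abs_mul]
  set a : ℕ → ℝ := extv N w with ha
  have hanonneg : ∀ n, 0 ≤ a n := fun n => by rw [hextw]; exact abs_nonneg _
  have hden1 : denF ω N a = 1 := hwK
  have htheta : thetaFin ω N a = NfD ω N w := by
    rw [thetaFin_eq, hden1, div_one]; rfl
  -- upper bound and membership
  have hub : ∀ x ∈ S, x ≤ NfD ω N w := by
    rintro x ⟨b, ⟨j, hj, hbj⟩, rfl⟩
    obtain ⟨u, huK, hNu⟩ := hnorm b j hj hbj
    rw [← hNu]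
    exact hwmax u huK
  have hexw : ∃ i : Fin (N + 1), w i ≠ 0 := by
    by_contra hcon
    push_neg at hcon
    have : DfD ω N w = 0 := by
      unfold DfD denF
      refine Finset.sum_eq_zero fun n hn => ?_
      rw [Finset.mem_range, Nat.lt_succ_iff] at hn
      rw [extv_of_le N _ hn, hcon]
      ring
    rw [hwK] at this
    exact one_ne_zero this
  obtain ⟨i₀, hi₀⟩ := hexw
  have hmem : NfD ω N w ∈ S := by
    refine ⟨a, ⟨(i₀ : ℕ), Nat.lt_succ_iff.mp i₀.isLt, ?_⟩, htheta.symm⟩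
    rw [ha, extv_coe]
    exact hi₀
  have hbdd : BddAbove S := ⟨NfD ω N w, fun x hx => hub x hx⟩
  have hU : UomegaFin ω N = NfD ω N w :=
    le_antisymm (csSup_le ⟨NfD ω N w, hmem⟩ hub) (le_csSup hbdd hmem)
  -- positivity of the maximum value
  have hones : thetaFin ω N (fun _ => (1:ℝ)) ∈ S :=
    ⟨fun _ => 1, ⟨0, Nat.zero_le _, one_ne_zero⟩, rfl⟩
  have htones : 0 < thetaFin ω N (fun _ => (1:ℝ)) := by
    rw [thetaFin_eq]
    refine div_pos ?_ ?_
    · refine Finset.sum_pos (fun n _ => by simpa using hpos (n + 1)) ?_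
      exact Finset.nonempty_range_iff.mpr (by omega)
    · refine Finset.sum_pos (fun n _ => by simpa using hpos (n + 1)) ?_
      exact Finset.nonempty_range_iff.mpr (by omega)
  have hUpos : 0 < NfD ω N w := lt_of_lt_of_le htones (hub _ hones)
  -- the maximizer has positive coordinates
  refine ⟨a, ?_, by rw [htheta, hU]⟩
  intro j hj
  rcases (hanonneg j).lt_or_eq with hlt | heq
  · exact hlt
  exfalso
  -- a j = 0; find adjacent zero/positive pair
  have hex : ∃ k ≤ N, a k ≠ 0 :=
    ⟨(i₀ : ℕ), Nat.lt_succ_iff.mp i₀.isLt, by rw [ha, extv_coe]; exact hi₀⟩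
  have hadj : ∃ i < N, (a i = 0 ∧ 0 < a (i + 1)) ∨ (0 < a i ∧ a (i + 1) = 0) := by
    by_contra hc
    push_neg at hc
    have hstep : ∀ i < N, (a i = 0 ↔ a (i + 1) = 0) := by
      intro i hi
      have hci := hc i hi
      constructor
      · intro h0
        exact le_antisymm (hci.1 h0) (hanonneg _)
      · intro h1
        by_contra h0
        exact hci.2 ((hanonneg i).lt_of_ne (Ne.symm h0)) h1
    have hall : ∀ i, i ≤ N → (a i = 0 ↔ a 0 = 0) := by
      intro i
      induction i with
      | zero => intro _; rfl
      | succ k ih =>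
        intro hk
        rw [← hstep k (by omega)]
        exact ih (by omega)
    obtain ⟨k, hk, hak⟩ := hex
    exact hak ((hall k hk).mpr ((hall j hj).mp heq.symm))
  obtain ⟨i, hiN, hcase⟩ := hadj
  -- extract the zero index z and its positive neighbor value p
  obtain ⟨z, p, hzN, haz, hp, ha0, hterm⟩ :
      ∃ z p, z ≤ N ∧ a z = 0 ∧ 0 < p ∧ a i * a (i + 1) = 0 ∧
        ∀ ε : ℝ, (Function.update a z ε) i * (Function.update a z ε) (i + 1) = ε * p := by
    rcases hcase with ⟨h0, h1⟩ | ⟨h0, h1⟩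
    · exact ⟨i, a (i + 1), hiN.le, h0, h1, by rw [h0]; ring, fun ε => by
        rw [Function.update_self, Function.update_of_ne (by omega : i + 1 ≠ i)]⟩
    · exact ⟨i + 1, a i, by omega, h1, h0, by rw [h1]; ring, fun ε => by
        rw [Function.update_self, Function.update_of_ne (by omega : i ≠ i + 1)]; ring⟩
  set U : ℝ := NfD ω N w with hUdef
  have hNfa : numF ω N a = U := rfl
  set ε : ℝ := (p * ω (i + 1)) / (2 * U * ω (z + 1)) with hε
  have hεpos : 0 < ε := by
    rw [hε]
    have h1 := hpos (i + 1)
    have h2 := hpos (z + 1)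
    positivity
  set b : ℕ → ℝ := Function.update a z ε with hb
  have hab : ∀ m, a m ≤ b m := by
    intro m
    by_cases hm : m = z
    · subst hm; rw [hb, Function.update_self, haz]; exact hεpos.le
    · rw [hb, Function.update_of_ne hm]
  have hnum : numF ω N a + ε * p * ω (i + 1) ≤ numF ω N b := by
    have hdiff : numF ω N b - numF ω N a
        = ∑ n ∈ Finset.range N, (b n * b (n + 1) - a n * a (n + 1)) * ω (n + 1) := by
      unfold numF
      rw [← Finset.sum_sub_distrib]
      exact Finset.sum_congr rfl fun n _ => by ring
    have hsingle : (b i * b (i + 1) - a i * a (i + 1)) * ω (i + 1)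
        ≤ ∑ n ∈ Finset.range N, (b n * b (n + 1) - a n * a (n + 1)) * ω (n + 1) := by
      refine Finset.single_le_sum (f := fun n => (b n * b (n + 1) - a n * a (n + 1)) * ω (n + 1))
        (fun n _ => ?_) (Finset.mem_range.mpr hiN)
      refine mul_nonneg (sub_nonneg.mpr ?_) (hpos _).le
      exact mul_le_mul (hab n) (hab (n + 1)) (hanonneg _) ((hanonneg n).trans (hab n))
    have hterm' : (b i * b (i + 1) - a i * a (i + 1)) * ω (i + 1) = ε * p * ω (i + 1) := by
      rw [hb, hterm ε, ha0]; ring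
    rw [hterm'] at hsingle
    linarith [hdiff ▸ hsingle]
  have hden2 : denF ω N b = 1 + ε ^ 2 * ω (z + 1) := by
    have hdiff : denF ω N b - denF ω N a
        = ∑ n ∈ Finset.range (N + 1), (b n ^ 2 - a n ^ 2) * ω (n + 1) := by
      unfold denF
      rw [← Finset.sum_sub_distrib]
      exact Finset.sum_congr rfl fun n _ => by ring
    have hvalue : ∑ n ∈ Finset.range (N + 1), (b n ^ 2 - a n ^ 2) * ω (n + 1)
        = ε ^ 2 * ω (z + 1) := by
      rw [Finset.sum_eq_single_of_mem z (Finset.mem_range.mpr (Nat.lt_succ_of_le hzN))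
        (fun n _ hn => by rw [hb, Function.update_of_ne hn]; ring)]
      rw [hb, Function.update_self, haz]
      ring
    have := hdiff.trans hvalue
    rw [hden1] at this
    linarith
  have hbS : thetaFin ω N b ∈ S :=
    ⟨b, ⟨z, hzN, by rw [hb, Function.update_self]; exact ne_of_gt hεpos⟩, rfl⟩
  have hble : thetaFin ω N b ≤ U := hub _ hbS
  have hgt : U < thetaFin ω N b := by
    rw [thetaFin_eq, hden2]
    have hdpos : (0:ℝ) < 1 + ε ^ 2 * ω (z + 1) := by
      have := hpos (z + 1); positivity
    calc U < (numF ω N a + ε * p * ω (i + 1)) / (1 + ε ^ 2 * ω (z + 1)) := by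
          rw [lt_div_iff₀ hdpos]
          have hkey : U * ε * ω (z + 1) = p * ω (i + 1) / 2 := by
            rw [hε]
            field_simp [ne_of_gt hUpos, ne_of_gt (hpos (z + 1))]
          have hppos : 0 < p * ω (i + 1) := mul_pos hp (hpos _)
          rw [hNfa]
          nlinarith [mul_pos hεpos hppos]
      _ ≤ numF ω N b / (1 + ε ^ 2 * ω (z + 1)) := by gcongr
  linarith
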